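/- For every graph G and every positive integer r, the Hadwiger number of the complete blow-up satisfies h(G[r]) ≤ r · h_f(G). -/

import Mathlib

open Finset

/-- Any two members of a bramble either share a vertex or are joined by an edge,
and each member induces a connected subgraph. -/
def IsBramble {V : Type} (G : SimpleGraph V) (B : Finset (Finset V)) : Prop :=
  (∀ A ∈ B, (G.induce (A : Set V)).Connected) ∧
    ∀ A ∈ B, ∀ A' ∈ B, (∃ v, v ∈ A ∧ v ∈ A') ∨ ∃ a ∈ A, ∃ b ∈ A', G.Adj a b

/-- A strong bramble: any two (possibly equal) members are joined by an edge. -/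
def IsStrongBramble {V : Type} (G : SimpleGraph V) (B : Finset (Finset V)) : Prop :=
  (∀ A ∈ B, (G.induce (A : Set V)).Connected) ∧
    ∀ A ∈ B, ∀ A' ∈ B, ∃ a ∈ A, ∃ b ∈ A', G.Adj a b

/-- A valid weighting: nonnegative weights whose total at every vertex is at most 1. -/
def IsValidWeight {V : Type} [DecidableEq V] (B : Finset (Finset V)) (w : Finset V → ℝ) : Prop :=
  (∀ A ∈ B, 0 ≤ w A) ∧ ∀ v : V, ∑ A ∈ B.filter (fun A => v ∈ A), w A ≤ 1

/-- The fractional Hadwiger number. -/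
noncomputable def fracHadwiger {V : Type} [Fintype V] [DecidableEq V] (G : SimpleGraph V) : ℝ :=
  sSup {h : ℝ | ∃ B : Finset (Finset V), ∃ w : Finset V → ℝ,
    IsBramble G B ∧ IsValidWeight B w ∧ h = ∑ A ∈ B, w A}

/-- The r-integral Hadwiger number: all weights multiples of 1/r. -/
noncomputable def rIntHadwiger {V : Type} [Fintype V] [DecidableEq V]
    (G : SimpleGraph V) (r : ℕ) : ℝ :=
  sSup {h : ℝ | ∃ B : Finset (Finset V), ∃ w : Finset V → ℝ,
    IsBramble G B ∧ IsValidWeight B w ∧ (∀ A ∈ B, ∃ k : ℕ, w A = k / r) ∧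
    h = ∑ A ∈ B, w A}

/-- The lower fractional Hadwiger number (using strong brambles). -/
noncomputable def lowerFracHadwiger {V : Type} [Fintype V] [DecidableEq V]
    (G : SimpleGraph V) : ℝ :=
  sSup {h : ℝ | ∃ B : Finset (Finset V), ∃ w : Finset V → ℝ,
    IsStrongBramble G B ∧ IsValidWeight B w ∧ h = ∑ A ∈ B, w A}

/-- The lower r-integral Hadwiger number. -/
noncomputable def lowerRIntHadwiger {V : Type} [Fintype V] [DecidableEq V]
    (G : SimpleGraph V) (r : ℕ) : ℝ :=
  sSup {h : ℝ | ∃ B : Finset (Finset V), ∃ w : Finset V → ℝ,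
    IsStrongBramble G B ∧ IsValidWeight B w ∧ (∀ A ∈ B, ∃ k : ℕ, w A = k / r) ∧
    h = ∑ A ∈ B, w A}

/-- `G` has a clique minor of order `t`. -/
def HasCliqueMinor {V : Type} (G : SimpleGraph V) (t : ℕ) : Prop :=
  ∃ f : Fin t → Finset V,
    (∀ i, (f i).Nonempty) ∧
    (∀ i, (G.induce ((f i : Set V))).Connected) ∧
    (∀ i j, i ≠ j → Disjoint (f i) (f j)) ∧
    (∀ i j, i ≠ j → ∃ a ∈ f i, ∃ b ∈ f j, G.Adj a b)

/-- `G` has a clique minor of order `t` and breadth at most `d` (each part has ≤ d vertices). -/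
def HasCliqueMinorBreadth {V : Type} (G : SimpleGraph V) (t : ℕ) (d : ℝ) : Prop :=
  ∃ f : Fin t → Finset V,
    (∀ i, (f i).Nonempty) ∧
    (∀ i, (G.induce ((f i : Set V))).Connected) ∧
    (∀ i j, i ≠ j → Disjoint (f i) (f j)) ∧
    (∀ i j, i ≠ j → ∃ a ∈ f i, ∃ b ∈ f j, G.Adj a b) ∧
    (∀ i, ((f i).card : ℝ) ≤ d)

/-- The Hadwiger number: the largest order of a clique minor. -/
noncomputable def hadwigerNumber {V : Type} (G : SimpleGraph V) : ℕ :=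
  sSup {t : ℕ | HasCliqueMinor G t}

/-- The lexicographic product of two graphs. -/
def lexProd {α β : Type} (G : SimpleGraph α) (H : SimpleGraph β) : SimpleGraph (α × β) where
  Adj x y := G.Adj x.1 y.1 ∨ (x.1 = y.1 ∧ H.Adj x.2 y.2)
  symm := by
    constructor
    intro x y hxy
    rcases hxy with h | ⟨h1, h2⟩
    · exact Or.inl h.symm
    · exact Or.inr ⟨h1.symm, h2.symm⟩
  loopless := by
    constructor
    intro x hx
    rcases hx with h | ⟨_, h2⟩
    · exact G.irrefl h
    · exact H.irrefl h2

/-- The complete blow-up `G[r] = G · K_r`. -/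
def completeBlowup {α : Type} (G : SimpleGraph α) (r : ℕ) : SimpleGraph (α × Fin r) :=
  lexProd G (⊤ : SimpleGraph (Fin r))

/-- The blow-up `G(r) = G · I_r`. -/
def emptyBlowup {α : Type} (G : SimpleGraph α) (r : ℕ) : SimpleGraph (α × Fin r) :=
  lexProd G (⊥ : SimpleGraph (Fin r))

/-- `H` is a minor of `G`: branch sets indexed by the vertices of `H`. -/
def IsMinor {W V : Type} (H : SimpleGraph W) (G : SimpleGraph V) : Prop :=
  ∃ f : W → Finset V,
    (∀ u, (G.induce ((f u : Set V))).Connected) ∧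
    (∀ u u', u ≠ u' → Disjoint (f u) (f u')) ∧
    (∀ u u', H.Adj u u' → ∃ a ∈ f u, ∃ b ∈ f u', G.Adj a b)

/-- The k × k grid graph. -/
def gridGraph (k : ℕ) : SimpleGraph (Fin k × Fin k) where
  Adj a b := (a.1 = b.1 ∧ (a.2.val + 1 = b.2.val ∨ b.2.val + 1 = a.2.val)) ∨
             (a.2 = b.2 ∧ (a.1.val + 1 = b.1.val ∨ b.1.val + 1 = a.1.val))
  symm := by
    constructor
    intro a b hab
    rcases hab with ⟨h1, h2⟩ | ⟨h1, h2⟩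
    · exact Or.inl ⟨h1.symm, h2.symm⟩
    · exact Or.inr ⟨h1.symm, h2.symm⟩
  loopless := by
    constructor
    intro a ha
    rcases ha with ⟨_, h | h⟩ | ⟨_, h | h⟩ <;> omega

/-!
Project every branch set of a `K_t`-minor of `G · H` onto `G`. The projections are connected, and
any two of them touch: an edge between two branch sets either projects to an edge of `G` or lies in a
fibre `{v} × V(H)`, giving a common vertex. The branch sets are disjoint and a fibre has `|V(H)|`
vertices, so every vertex of `G` lies in at most `|V(H)|` projections. Weighting each projection by
its multiplicity divided by `|V(H)|` is therefore a valid weighting of a bramble, of total `t / |V(H)|`.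
-/

theorem SimpleGraph.Connected.induce_image {V W : Type} {G : SimpleGraph V} {H : SimpleGraph W}
    (φ : V → W) (hφ : ∀ ⦃a b⦄, G.Adj a b → φ a = φ b ∨ H.Adj (φ a) (φ b)) {s : Set V}
    (hs : (G.induce s).Connected) : (H.induce (φ '' s)).Connected := by
  set ψ := Set.imageFactorization φ s
  have hreach : ∀ x y : s, (H.induce (φ '' s)).Reachable (ψ x) (ψ y) := by
    intro x y
    rw [SimpleGraph.reachable_iff_reflTransGen]
    refine Relation.ReflTransGen.lift' _ (fun a b hab => ?_) x y
      ((SimpleGraph.reachable_iff_reflTransGen x y).mp (hs.preconnected x y))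
    rcases hφ hab with heq | hadj
    · rw [Function.onFun, show ψ a = ψ b from Subtype.ext heq]
    · exact .single hadj
  rw [SimpleGraph.connected_iff]
  exact ⟨Set.imageFactorization_surjective.forall₂.mpr hreach, hs.nonempty.map ψ⟩

theorem HasCliqueMinor.le_card {V : Type} [Fintype V] {G : SimpleGraph V} {t : ℕ}
    (h : HasCliqueMinor G t) : t ≤ Fintype.card V := by
  obtain ⟨f, hne, -, hdisj, -⟩ := h
  simpa using card_le_card_of_forall_subsingleton (s := (univ : Finset (Fin t)))
    (t := (univ : Finset V)) (fun i v => v ∈ f i)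
    (fun i _ => (hne i).imp fun v hv => ⟨mem_univ v, hv⟩)
    (fun v _ i ⟨_, hi⟩ j ⟨_, hj⟩ => by_contra fun hij => disjoint_left.mp (hdisj i j hij) hi hj)

theorem hasCliqueMinor_hadwigerNumber {V : Type} [Fintype V] (G : SimpleGraph V) :
    HasCliqueMinor G (hadwigerNumber G) :=
  Nat.sSup_mem
    ⟨0, (⟨Fin.elim0, nofun, nofun, nofun, nofun⟩ : HasCliqueMinor G 0)⟩
    ⟨Fintype.card V, fun _ => HasCliqueMinor.le_card⟩

theorem card_filter_mem_image_fst_le {ι α β : Type} [Fintype ι] [Fintype β] [DecidableEq α]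
    {f : ι → Finset (α × β)} (hdisj : ∀ i j, i ≠ j → Disjoint (f i) (f j)) (v : α) :
    #{i | v ∈ (f i).image Prod.fst} ≤ Fintype.card β := by
  refine (card_le_card_of_forall_subsingleton (t := univ) (fun i b => (v, b) ∈ f i)
    (fun i hi => ?_) fun b _ i ⟨_, hi⟩ j ⟨_, hj⟩ => ?_).trans_eq card_univ
  · obtain ⟨x, hx, rfl⟩ := mem_image.mp (mem_filter.mp hi).2
    exact ⟨x.2, mem_univ _, hx⟩
  · by_contra hij
    exact disjoint_left.mp (hdisj i j hij) hi hj

section Fractional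

variable {V : Type} [Fintype V] [DecidableEq V] {G : SimpleGraph V}

theorem IsValidWeight.sum_le_card {B : Finset (Finset V)} {w : Finset V → ℝ}
    (hw : IsValidWeight B w) (hB : ∀ A ∈ B, A.Nonempty) : ∑ A ∈ B, w A ≤ Fintype.card V :=
  calc ∑ A ∈ B, w A ≤ ∑ A ∈ B, ∑ _v ∈ A, w A := by
        refine sum_le_sum fun A hA => ?_
        rw [sum_const, nsmul_eq_mul]
        exact le_mul_of_one_le_left (hw.1 A hA) (by exact_mod_cast (hB A hA).card_pos)
    _ = ∑ v, ∑ A ∈ B with v ∈ A, w A := sum_comm' (by simp)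
    _ ≤ ∑ _v : V, 1 := sum_le_sum fun v _ => hw.2 v
    _ = Fintype.card V := by simp

theorem IsBramble.sum_le_fracHadwiger {B : Finset (Finset V)} {w : Finset V → ℝ}
    (hB : IsBramble G B) (hw : IsValidWeight B w) : ∑ A ∈ B, w A ≤ fracHadwiger G := by
  refine le_csSup ⟨Fintype.card V, ?_⟩ ⟨B, w, hB, hw, rfl⟩
  rintro _ ⟨B, w, hB, hw, rfl⟩
  exact hw.sum_le_card fun A hA => by simpa [Finset.Nonempty] using (hB.1 A hA).nonempty

theorem card_le_mul_fracHadwiger {ι : Type} [Fintype ι] (g : ι → Finset V)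
    (hconn : ∀ i, (G.induce (g i : Set V)).Connected)
    (htouch : ∀ i j, (∃ v, v ∈ g i ∧ v ∈ g j) ∨ ∃ a ∈ g i, ∃ b ∈ g j, G.Adj a b)
    {r : ℕ} (hr : 0 < r) (hdeg : ∀ v, #{i | v ∈ g i} ≤ r) :
    (Fintype.card ι : ℝ) ≤ r * fracHadwiger G := by
  have hr' : (0 : ℝ) < r := by exact_mod_cast hr
  set w : Finset V → ℝ := fun A => (#{i | g i = A} : ℝ) / r
  have hB : IsBramble G (univ.image g) := by
    simp only [IsBramble, forall_mem_image, mem_univ, forall_const]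
    exact ⟨hconn, htouch⟩
  have hvertex : ∀ v, ∑ A ∈ univ.image g with v ∈ A, w A = (#{i | v ∈ g i} : ℝ) / r := by
    intro v
    rw [card_eq_sum_card_fiberwise (f := g) (t := {A ∈ univ.image g | v ∈ A})
      (by intro i hi; simpa using hi), Nat.cast_sum, sum_div]
    refine sum_congr rfl fun A hA => ?_
    have hfiber : (univ.filter (v ∈ g ·)).filter (g · = A) = univ.filter (g · = A) := by
      ext i
      simp only [mem_filter, mem_univ, true_and, and_iff_right_iff_imp]
      rintro rfl
      exact (mem_filter.mp hA).2
    rw [hfiber]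
  have hw : IsValidWeight (univ.image g) w := by
    refine ⟨fun A _ => by positivity, fun v => ?_⟩
    rw [hvertex, div_le_one hr']
    exact_mod_cast hdeg v
  have htotal : ∑ A ∈ univ.image g, w A = Fintype.card ι / r := by
    rw [← card_univ, card_eq_sum_card_image g univ, Nat.cast_sum, sum_div]
  rw [← div_le_iff₀' hr', ← htotal]
  exact hB.sum_le_fracHadwiger hw

theorem HasCliqueMinor.le_card_mul_fracHadwiger {β : Type} [Fintype β] {H : SimpleGraph β}
    {t : ℕ} (h : HasCliqueMinor (lexProd G H) t) :
    (t : ℝ) ≤ Fintype.card β * fracHadwiger G := by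
  rcases (Fintype.card β).eq_zero_or_pos with hβ | hβ
  · have ht : t = 0 := by simpa [hβ] using h.le_card
    simp [ht, hβ]
  obtain ⟨f, hne, hconn, hdisj, hadj⟩ := h
  have hproj : ∀ ⦃x y : V × β⦄, (lexProd G H).Adj x y → x.1 = y.1 ∨ G.Adj x.1 y.1 :=
    fun x y hxy => hxy.elim Or.inr (Or.inl ∘ And.left)
  have htouch : ∀ i j, (∃ v, v ∈ (f i).image Prod.fst ∧ v ∈ (f j).image Prod.fst) ∨
      ∃ a ∈ (f i).image Prod.fst, ∃ b ∈ (f j).image Prod.fst, G.Adj a b := by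
    intro i j
    rcases eq_or_ne i j with rfl | hij
    · obtain ⟨x, hx⟩ := hne i
      exact Or.inl ⟨x.1, mem_image_of_mem _ hx, mem_image_of_mem _ hx⟩
    obtain ⟨a, ha, b, hb, hab⟩ := hadj i j hij
    rcases hproj hab with heq | hG
    · exact Or.inl ⟨a.1, mem_image_of_mem _ ha, heq ▸ mem_image_of_mem _ hb⟩
    · exact Or.inr ⟨a.1, mem_image_of_mem _ ha, b.1, mem_image_of_mem _ hb, hG⟩
  simpa using card_le_mul_fracHadwiger _
    (fun i => by rw [coe_image]; exact (hconn i).induce_image Prod.fst hproj) htouch hβ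
    (card_filter_mem_image_fst_le hdisj)

end Fractional

theorem hadwiger_completeBlowup_le_general
    {V : Type} [Fintype V] [DecidableEq V] (G : SimpleGraph V) (r : ℕ) :
    (hadwigerNumber (completeBlowup G r) : ℝ) ≤ (r : ℝ) * fracHadwiger G := by
  simpa using (hasCliqueMinor_hadwigerNumber (completeBlowup G r)).le_card_mul_fracHadwiger

/-- `h(G[r]) ≤ r · h_f(G)`. -/
theorem hadwiger_completeBlowup_le
    {V : Type} [Fintype V] [DecidableEq V] (G : SimpleGraph V) (r : ℕ) (hr : 0 < r) :
    (hadwigerNumber (completeBlowup G r) : ℝ) ≤ (r : ℝ) * fracHadwiger G :=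
  hadwiger_completeBlowup_le_general G r
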